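/- arXiv:1305.0288 — 2 statements merged into one kernel-verified Lean document; each statement's English description precedes it below -/
import Mathlib

section
/- If 0 < β ≤ α/2 + 1, every solution of the system ṁ = -2(m + tanh(λ)), λ̇ = 2β(m + tanh(λ)) - αλ converges to the origin as t → ∞. -/
/-!
With `u = β m + λ` and `v = -α λ` the system becomes the Liénard system `u' = v`,
`v' = -2α u - f(v)` with `f(w) = (2 + α) w - 2αβ tanh (w / α)`. Since `|tanh x| < |x|` for
`x ≠ 0`, the condition `β ≤ α/2 + 1` makes the damping `w f(w)` positive for `w ≠ 0`, so the energy
`E = v² + 2α u²` decreases to some `e ≥ 0`. The damping vanishes at `v = 0`, so to get `e = 0`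
we perturb the energy to `E + ε u v`: if `e > 0`, then on the annulus `e ≤ E ≤ E(0)` its
derivative is at most a negative constant (where `v` is small the term `-2αε u²` dominates,
elsewhere the damping does), which contradicts its boundedness from below.
-/

open Real Filter Topology Set

namespace Real

theorem sinh_lt_mul_cosh {x : ℝ} (hx : 0 < x) : sinh x < x * cosh x := by
  have hmono : StrictMonoOn (fun y => y * cosh y - sinh y) (Ici 0) := by
    refine strictMonoOn_of_hasDerivWithinAt_pos (convex_Ici 0) (by fun_prop)
      (fun y _ => (((hasDerivAt_id y).mul (hasDerivAt_cosh y)).sub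
        (hasDerivAt_sinh y)).hasDerivWithinAt) fun y hy => ?_
    rw [interior_Ici, mem_Ioi] at hy
    simpa using mul_pos hy (sinh_pos_iff.2 hy)
  simpa using hmono self_mem_Ici hx.le hx

theorem tanh_lt_self {x : ℝ} (hx : 0 < x) : tanh x < x := by
  rw [tanh_eq_sinh_div_cosh, div_lt_iff₀ (cosh_pos x)]
  exact sinh_lt_mul_cosh hx

theorem tanh_nonneg {x : ℝ} (hx : 0 ≤ x) : 0 ≤ tanh x := by
  rw [tanh_eq_sinh_div_cosh]
  exact div_nonneg (sinh_nonneg_iff.2 hx) (cosh_pos x).le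

theorem tanh_abs (x : ℝ) : tanh |x| = |tanh x| := by
  rcases le_or_gt 0 x with hx | hx
  · rw [abs_of_nonneg hx, abs_of_nonneg (tanh_nonneg hx)]
  · rw [abs_of_neg hx, tanh_neg, abs_of_nonpos]
    simpa [tanh_neg] using tanh_nonneg (neg_nonneg.2 hx.le)

theorem abs_tanh_le_abs (x : ℝ) : |tanh x| ≤ |x| := by
  rw [← tanh_abs]
  rcases (abs_nonneg x).eq_or_lt with h | h
  · simp [← h]
  · exact (tanh_lt_self h).le

theorem mul_tanh_lt_sq {x : ℝ} (hx : x ≠ 0) : x * tanh x < x ^ 2 := by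
  have heven : x * tanh x = |x| * tanh |x| := by
    rcases abs_cases x with ⟨h, -⟩ | ⟨h, -⟩ <;> simp [h, tanh_neg]
  rw [heven, ← sq_abs]
  have hpos := abs_pos.2 hx
  nlinarith [tanh_lt_self hpos]

@[fun_prop]
theorem continuous_tanh : Continuous tanh := by
  simp only [funext tanh_eq_sinh_div_cosh]
  exact continuous_sinh.div continuous_cosh fun x => (cosh_pos x).ne'

end Real

theorem tendsto_atBot_of_hasDerivAt_le_neg {W W' : ℝ → ℝ} {c : ℝ} (hc : 0 < c)
    (hW : ∀ t, HasDerivAt W (W' t) t) (hle : ∀ t, 0 ≤ t → W' t ≤ -c) :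
    Tendsto W atTop atBot := by
  have hbound : ∀ t, 0 ≤ t → W t ≤ W 0 + -c * t := by
    intro t ht
    have := (convex_Ici (0 : ℝ)).image_sub_le_mul_sub_of_deriv_le
      (fun x _ => (hW x).continuousAt.continuousWithinAt)
      (fun x _ => (hW x).differentiableAt.differentiableWithinAt)
      (fun x hx => (hW x).deriv ▸ hle x (interior_subset hx)) 0 self_mem_Ici t ht ht
    linarith
  refine tendsto_atBot_mono' _ (eventually_atTop.2 ⟨0, hbound⟩) ?_
  exact tendsto_atBot_add_const_left _ _ (tendsto_id.const_mul_atTop_of_neg (neg_neg_of_pos hc))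

theorem exists_pos_le_of_sq_mem_Icc {g : ℝ → ℝ} (hg : Continuous g) (hpos : ∀ w ≠ 0, 0 < g w)
    {δ B : ℝ} (hδ : 0 < δ) : ∃ μ > 0, ∀ w, w ^ 2 ∈ Icc δ B → μ ≤ g w := by
  have hK : IsCompact (Icc (-√B) √B ∩ {w | δ ≤ w ^ 2}) :=
    isCompact_Icc.inter_right (isClosed_le continuous_const (continuous_pow 2))
  obtain ⟨μ, hμ, hle⟩ := hK.exists_forall_le' hg.continuousOn fun w hw =>
    hpos w fun h => by simp [h] at hw; linarith
  exact ⟨μ, hμ, fun w hw => hle w ⟨abs_le.1 (abs_le_sqrt hw.2), hw.1⟩⟩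

theorem neg_mul_le_of_abs_le {k L x y z : ℝ} (hk : 0 < k) (hz : |z| ≤ L * |y|) :
    -(x * z) ≤ k / 2 * x ^ 2 + L ^ 2 / (2 * k) * y ^ 2 := by
  have hxz : -(x * z) ≤ |x| * (L * |y|) := by
    calc -(x * z) ≤ |x * z| := neg_le_abs _
      _ = |x| * |z| := abs_mul x z
      _ ≤ |x| * (L * |y|) := mul_le_mul_of_nonneg_left hz (abs_nonneg x)
  have hamgm : |x| * (L * |y|) ≤ k / 2 * x ^ 2 + L ^ 2 / (2 * k) * y ^ 2 := by
    rw [← sq_abs x, ← sq_abs y, ← sub_nonneg]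
    have : k / 2 * |x| ^ 2 + L ^ 2 / (2 * k) * |y| ^ 2 - |x| * (L * |y|)
        = (k * |x| - L * |y|) ^ 2 / (2 * k) := by field_simp; ring
    rw [this]; positivity
  exact hxz.trans hamgm

namespace Lienard

variable {k L : ℝ} {f u v : ℝ → ℝ}

noncomputable def energy (k : ℝ) (u v : ℝ → ℝ) (t : ℝ) : ℝ := v t ^ 2 + k * u t ^ 2

theorem energy_nonneg (hk : 0 ≤ k) (t : ℝ) : 0 ≤ energy k u v t := by
  unfold energy; positivity

theorem sq_le_energy (hk : 0 ≤ k) (t : ℝ) : v t ^ 2 ≤ energy k u v t := by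
  unfold energy; nlinarith [sq_nonneg (u t)]

theorem mul_sq_le_energy (t : ℝ) : k * u t ^ 2 ≤ energy k u v t := by
  unfold energy; nlinarith [sq_nonneg (v t)]

theorem neg_le_perturbedEnergy {ε B : ℝ} (hk : 0 < k) (hε : 0 ≤ ε) {t : ℝ}
    (hB : energy k u v t ≤ B) : -(ε / 2 * (B / k + B)) ≤ energy k u v t + ε * (u t * v t) := by
  have hu : u t ^ 2 ≤ B / k := by
    rw [le_div_iff₀ hk]; linarith [mul_sq_le_energy (u := u) (v := v) (k := k) t]
  have hv : v t ^ 2 ≤ B := (sq_le_energy hk.le t).trans hB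
  have huv : -(u t ^ 2 + v t ^ 2) / 2 ≤ u t * v t := by nlinarith [sq_nonneg (u t + v t)]
  nlinarith [energy_nonneg (u := u) (v := v) hk.le t, mul_le_mul_of_nonneg_left huv hε]

theorem perturbedEnergy_deriv_le {M e δ μ ε x y z : ℝ} (hk : 0 < k) (hε : 0 ≤ ε)
    (hM : 1 + L ^ 2 / (2 * k) ≤ M) (hz : |z| ≤ L * |y|) (hyz : 0 ≤ y * z)
    (hδ : (2 * M + 1) * δ ≤ e / 2) (hμ : δ ≤ y ^ 2 → μ ≤ y * z) (hεμ : ε * M * y ^ 2 ≤ μ)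
    (he : e ≤ y ^ 2 + k * x ^ 2) :
    -2 * (y * z) + ε * (y * y + x * (-k * x - z)) ≤ -min (ε * e / 4) μ := by
  have hM0 : 0 ≤ M := le_trans (by positivity) hM
  have hcross := neg_mul_le_of_abs_le (x := x) hk hz
  have hquad : y * y + x * (-k * x - z) ≤ M * y ^ 2 - k / 2 * x ^ 2 := by
    nlinarith [mul_le_mul_of_nonneg_right hM (sq_nonneg y)]
  have hrate := mul_le_mul_of_nonneg_left hquad hε
  rcases le_or_gt (y ^ 2) δ with hsmall | hlarge
  · have : M * y ^ 2 - k / 2 * x ^ 2 ≤ -(e / 4) := by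
      nlinarith [mul_le_mul_of_nonneg_left hsmall hM0]
    have := mul_le_mul_of_nonneg_left this hε
    have := min_le_left (ε * e / 4) μ
    linarith
  · have := hμ hlarge.le
    have := min_le_right (ε * e / 4) μ
    nlinarith [mul_nonneg hε (mul_nonneg hk.le (sq_nonneg x))]

section
variable (hu : ∀ t, HasDerivAt u (v t) t) (hv : ∀ t, HasDerivAt v (-k * u t - f (v t)) t)
include hu hv

theorem hasDerivAt_energy (t : ℝ) :
    HasDerivAt (energy k u v) (-2 * (v t * f (v t))) t :=
  (((hv t).pow 2).add (((hu t).pow 2).const_mul k)).congr_deriv (by push_cast; ring)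

theorem energy_antitone (hdamp : ∀ w, 0 ≤ w * f w) : Antitone (energy k u v) :=
  antitone_of_hasDerivAt_nonpos (hasDerivAt_energy hu hv) fun t =>
    (by linarith [hdamp (v t)] : -2 * (v t * f (v t)) ≤ 0)

theorem hasDerivAt_perturbedEnergy (ε t : ℝ) :
    HasDerivAt (fun s => energy k u v s + ε * (u s * v s))
      (-2 * (v t * f (v t)) + ε * (v t * v t + u t * (-k * u t - f (v t)))) t :=
  (hasDerivAt_energy hu hv t).add (((hu t).mul (hv t)).const_mul ε)

theorem energy_tendsto_zero (hk : 0 < k) (hf : Continuous f) (hpos : ∀ w ≠ 0, 0 < w * f w)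
    (hL : ∀ w, |f w| ≤ L * |w|) : Tendsto (energy k u v) atTop (𝓝 0) := by
  have hdamp : ∀ w, 0 ≤ w * f w := fun w => by
    rcases eq_or_ne w 0 with rfl | hw
    · simp
    · exact (hpos w hw).le
  have hanti := energy_antitone hu hv hdamp
  have hbdd : BddBelow (range (energy k u v)) := ⟨0, forall_mem_range.2 (energy_nonneg hk.le)⟩
  set e := ⨅ t, energy k u v t
  have hle : ∀ t, e ≤ energy k u v t := ciInf_le hbdd
  have hlim : Tendsto (energy k u v) atTop (𝓝 e) := tendsto_atTop_ciInf hanti hbdd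
  suffices he : e = 0 by rwa [he] at hlim
  by_contra hne
  have he : 0 < e := (le_ciInf (energy_nonneg hk.le)).lt_of_ne' hne
  set B := energy k u v 0
  have hB : 0 < B := he.trans_le (hle 0)
  set M := 1 + L ^ 2 / (2 * k)
  have hM : 0 < M := by positivity
  set δ := e / (4 * M + 2) with hδ
  obtain ⟨μ, hμ, hμle⟩ := exists_pos_le_of_sq_mem_Icc (by fun_prop) hpos
    (δ := δ) (B := B) (by positivity)
  set ε := μ / (M * B) with hε_def
  have hε : 0 < ε := by positivity
  have hrate : ∀ t, 0 ≤ t → -2 * (v t * f (v t)) + ε * (v t * v t + u t * (-k * u t - f (v t)))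
      ≤ -min (ε * e / 4) μ := fun t ht => by
    have hvB : v t ^ 2 ≤ B := (sq_le_energy hk.le t).trans (hanti ht)
    refine perturbedEnergy_deriv_le hk hε.le le_rfl (hL (v t)) (hdamp (v t)) ?_ (fun h => hμle _ ⟨h, hvB⟩)
      ?_ (hle t)
    · exact (show (2 * M + 1) * δ = e / 2 by rw [hδ]; field_simp; ring).le
    · calc ε * M * v t ^ 2 ≤ ε * M * B := by gcongr
        _ = μ := by rw [hε_def]; field_simp
  have hdown := tendsto_atBot_of_hasDerivAt_le_neg (lt_min (by positivity) hμ)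
    (hasDerivAt_perturbedEnergy hu hv ε) hrate
  obtain ⟨t, ht, ht0⟩ := ((hdown.eventually (eventually_lt_atBot (-(ε / 2 * (B / k + B))))).and
    (eventually_ge_atTop 0)).exists
  linarith [neg_le_perturbedEnergy hk hε.le (hanti ht0)]

theorem tendsto_zero (hk : 0 < k) (hf : Continuous f) (hpos : ∀ w ≠ 0, 0 < w * f w)
    (hL : ∀ w, |f w| ≤ L * |w|) : Tendsto (fun t => (u t, v t)) atTop (𝓝 (0, 0)) := by
  have hE := energy_tendsto_zero hu hv hk hf hpos hL
  have hu0 : Tendsto u atTop (𝓝 0) := by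
    refine squeeze_zero_norm (fun t => abs_le_sqrt ?_) (by simpa using (hE.div_const k).sqrt)
    rw [le_div_iff₀' hk]
    exact mul_sq_le_energy t
  have hv0 : Tendsto v atTop (𝓝 0) :=
    squeeze_zero_norm (fun t => abs_le_sqrt (sq_le_energy hk.le t)) (by simpa using hE.sqrt)
  exact hu0.prodMk_nhds hv0

end

end Lienard

noncomputable def tanhDamping (α β w : ℝ) : ℝ := (2 + α) * w - 2 * α * β * tanh (w / α)

theorem continuous_tanhDamping (α β : ℝ) : Continuous (tanhDamping α β) := by
  unfold tanhDamping; fun_prop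

theorem mul_tanhDamping_pos {α β w : ℝ} (hα : 0 < α) (hβ : 0 < β) (hβα : β ≤ α / 2 + 1)
    (hw : w ≠ 0) : 0 < w * tanhDamping α β w := by
  set x := w / α with hx
  have hlt := mul_tanh_lt_sq (div_ne_zero hw hα.ne')
  have hsplit : w * tanhDamping α β w
      = α ^ 2 * ((2 + α - 2 * β) * x ^ 2 + 2 * β * (x ^ 2 - x * tanh x)) := by
    unfold tanhDamping; rw [hx]; field_simp; ring
  rw [hsplit]
  have : 0 ≤ (2 + α - 2 * β) * x ^ 2 := mul_nonneg (by linarith) (sq_nonneg x)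
  have : 0 < 2 * β * (x ^ 2 - x * tanh x) := mul_pos (by positivity) (by linarith)
  positivity

theorem abs_tanhDamping_le {α β : ℝ} (hα : 0 < α) (hβ : 0 ≤ β) (w : ℝ) :
    |tanhDamping α β w| ≤ (2 + α + 2 * β) * |w| := by
  have htanh : |tanh (w / α)| ≤ |w| / α := by
    simpa [abs_div, abs_of_pos hα] using abs_tanh_le_abs (w / α)
  calc |tanhDamping α β w|
      ≤ |(2 + α) * w| + |2 * α * β * tanh (w / α)| := abs_sub _ _
    _ = (2 + α) * |w| + 2 * α * β * |tanh (w / α)| := by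
      rw [abs_mul, abs_mul, abs_of_pos (by positivity : (0 : ℝ) < 2 + α),
        abs_of_nonneg (by positivity : (0 : ℝ) ≤ 2 * α * β)]
    _ ≤ (2 + α) * |w| + 2 * α * β * (|w| / α) := by gcongr
    _ = (2 + α + 2 * β) * |w| := by field_simp

/-- If 0 < β ≤ α/2 + 1, every solution of ṁ = -2(m + tanh λ),
λ̇ = 2β(m + tanh λ) - αλ converges to the origin as t → ∞. -/
theorem stmt_9 (α β : ℝ) (hα : 0 < α) (hβ : 0 < β) (hβα : β ≤ α / 2 + 1)
    (m l : ℝ → ℝ)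
    (hm : ∀ t, HasDerivAt m (-2 * (m t + Real.tanh (l t))) t)
    (hl : ∀ t, HasDerivAt l (2 * β * (m t + Real.tanh (l t)) - α * l t) t) :
    Filter.Tendsto (fun t => (m t, l t)) Filter.atTop (nhds ((0 : ℝ), (0 : ℝ))) := by
  set u := fun t => β * m t + l t with hu_def
  set v := fun t => -α * l t with hv_def
  have hu : ∀ t, HasDerivAt u (v t) t := fun t =>
    (((hm t).const_mul β).add (hl t)).congr_deriv (by ring)
  have hv : ∀ t, HasDerivAt v (-(2 * α) * u t - tanhDamping α β (v t)) t := fun t =>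
    ((hl t).const_mul (-α)).congr_deriv (by
      rw [tanhDamping, show -α * l t / α = -l t by field_simp, tanh_neg]; ring)
  have huv := Lienard.tendsto_zero hu hv (by positivity) (continuous_tanhDamping α β)
    (fun w hw => mul_tanhDamping_pos hα hβ hβα hw) (abs_tanhDamping_le hα hβ.le)
  have hl0 : Tendsto l atTop (𝓝 0) := by
    simpa [hv_def, hα.ne'] using huv.snd_nhds.const_mul (-α⁻¹)
  have hm0 : Tendsto m atTop (𝓝 0) := by
    simpa [hu_def, hβ.ne'] using (huv.fst_nhds.sub hl0).const_mul β⁻¹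
  exact hm0.prodMk_nhds hl0
end

section
/- The function q((s, λ), u) = -2h(s)·1_{(0, 1 + h(s)tanh(λ))}(u), with h(s) = max(-1, min(s, 1)), satisfies the L¹ Lipschitz estimate: for all (s,λ), (s',λ') ∈ ℝ², ∫₀² |q((s,λ),u) - q((s',λ'),u)| du ≤ 6(|s - s'| + |λ - λ'|). -/
open MeasureTheory Real Set
open scoped symmDiff ENNReal

/-!
With `c = -2 h(s)` and `a = 1 + h(s) tanh λ`, split
`c 1_{(0,a)} - c' 1_{(0,a')} = (c - c') 1_{(0,a)} + c' (1_{(0,a)} - 1_{(0,a')})`;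
the last bracket has absolute value the indicator of the symmetric difference of the two
intervals, whose length is at most `|a - a'|`. As `h` and `tanh` are `1`-Lipschitz and bounded
by `1`, `|c - c'| ≤ 2|s - s'|`, `|c'| ≤ 2` and `|a - a'| ≤ |s - s'| + |λ - λ'|`, so the integral
over `(0,2)` is at most `2 · 2|s - s'| + 2 (|s - s'| + |λ - λ'|)`.
-/

theorem Real.hasDerivAt_tanh (x : ℝ) : HasDerivAt tanh (1 / cosh x ^ 2) x := by
  have hquot := (hasDerivAt_sinh x).div (hasDerivAt_cosh x) (cosh_pos x).ne'
  rw [show tanh = sinh / cosh from funext tanh_eq_sinh_div_cosh]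
  refine hquot.congr_deriv ?_
  congr 1
  linear_combination cosh_sq x

theorem Real.lipschitzWith_tanh : LipschitzWith 1 tanh := by
  refine lipschitzWith_of_nnnorm_deriv_le (fun x => (hasDerivAt_tanh x).differentiableAt)
    fun x => ?_
  rw [(hasDerivAt_tanh x).deriv, ← NNReal.coe_le_coe, coe_nnnorm, NNReal.coe_one, norm_div,
    norm_one, norm_pow, norm_of_nonneg (cosh_pos x).le]
  exact div_le_one_of_le₀ (one_le_pow₀ (one_le_cosh x)) (by positivity)

theorem abs_mul_sub_mul_le_of_abs_le_one {x x' y y' : ℝ} (hx : |x| ≤ 1) (hy' : |y'| ≤ 1) :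
    |x * y - x' * y'| ≤ |x - x'| + |y - y'| :=
  calc |x * y - x' * y'| = |x * (y - y') + (x - x') * y'| := by ring_nf
    _ ≤ |x| * |y - y'| + |x - x'| * |y'| := by
      rw [← abs_mul, ← abs_mul]; exact abs_add_le _ _
    _ ≤ |x - x'| + |y - y'| := by
      nlinarith [abs_nonneg (y - y'), abs_nonneg (x - x')]

theorem volume_real_Ioo_symmDiff_Ioo_le (b a a' : ℝ) :
    volume.real (Ioo b a ∆ Ioo b a') ≤ |a - a'| := by
  have hsub : Ioo b a ∆ Ioo b a' ⊆ uIcc a a' := by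
    intro u hu
    simp only [mem_symmDiff, mem_Ioo, not_and, not_lt] at hu
    rw [mem_uIcc]
    rcases hu with ⟨⟨h1, h2⟩, h3⟩ | ⟨⟨h1, h2⟩, h3⟩
    · exact Or.inr ⟨h3 h1, h2.le⟩
    · exact Or.inl ⟨h3 h1, h2.le⟩
  calc volume.real (Ioo b a ∆ Ioo b a') ≤ volume.real (uIcc a a') :=
        measureReal_mono hsub (by simp [volume_interval])
    _ = |a - a'| := by
      rw [measureReal_def, volume_interval, abs_sub_comm, ENNReal.toReal_ofReal (abs_nonneg _)]

theorem abs_mul_indicator_sub_mul_indicator_le {α : Type*} (A B : Set α) (c c' : ℝ) (u : α) :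
    |c * A.indicator (fun _ => (1 : ℝ)) u - c' * B.indicator (fun _ => (1 : ℝ)) u|
      ≤ |c - c'| + |c'| * (A ∆ B).indicator (fun _ => (1 : ℝ)) u := by
  have htri : |c| ≤ |c - c'| + |c'| := by simpa using abs_add_le (c - c') c'
  by_cases hA : u ∈ A <;> by_cases hB : u ∈ B <;> simp [hA, hB, mem_symmDiff, htri]

theorem setIntegral_abs_mul_indicator_sub_mul_indicator_le {α : Type*} [MeasurableSpace α]
    {μ : Measure α} {S A B : Set α}
    (hS : μ S ≠ ∞) (hAB : MeasurableSet (A ∆ B)) (hAB' : μ (A ∆ B) ≠ ∞) (c c' : ℝ) :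
    ∫ u in S, |c * A.indicator (fun _ => (1 : ℝ)) u - c' * B.indicator (fun _ => (1 : ℝ)) u| ∂μ
      ≤ |c - c'| * μ.real S + |c'| * μ.real (A ∆ B) := by
  have : Fact (μ S < ∞) := ⟨hS.lt_top⟩
  have hint : Integrable (fun u => |c - c'| + |c'| * (A ∆ B).indicator (fun _ => (1 : ℝ)) u)
      (μ.restrict S) :=
    (integrable_const _).add ((integrable_const 1).indicator hAB |>.const_mul _)
  calc _ ≤ ∫ u in S, (|c - c'| + |c'| * (A ∆ B).indicator (fun _ => (1 : ℝ)) u) ∂μ :=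
        integral_mono_of_nonneg (ae_of_all _ fun _ => abs_nonneg _) hint
          (ae_of_all _ (abs_mul_indicator_sub_mul_indicator_le A B c c'))
    _ = |c - c'| * μ.real S + |c'| * μ.real (A ∆ B ∩ S) := by
        rw [integral_add (integrable_const _) ((integrable_const 1).indicator hAB |>.const_mul _),
          integral_const_mul, integral_indicator_const _ hAB, measureReal_restrict_apply hAB]
        simp [mul_comm]
    _ ≤ |c - c'| * μ.real S + |c'| * μ.real (A ∆ B) := by
        have := measureReal_mono (s₂ := A ∆ B) (μ := μ) (inter_subset_left (t := S)) hAB'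
        gcongr

/-- The jump coefficient q((s,λ),u) = -2 h(s) 1_{(0, 1 + h(s) tanh λ)}(u),
h(s) = (-1) ∨ (s ∧ 1), satisfies the L¹ Lipschitz estimate
∫₀² |q((s,λ),u) - q((s',λ'),u)| du ≤ 6(|s - s'| + |λ - λ'|). -/
theorem stmt_13
    (h : ℝ → ℝ) (hh : h = fun s => max (-1) (min s 1))
    (q : ℝ × ℝ → ℝ → ℝ)
    (hq : q = fun p u => -2 * h p.1 *
      Set.indicator (Set.Ioo 0 (1 + h p.1 * Real.tanh p.2)) (fun _ => (1 : ℝ)) u) :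
    ∀ s l s' l' : ℝ,
      ∫ u in Set.Ioo (0 : ℝ) 2, |q (s, l) u - q (s', l') u|
        ≤ 6 * (|s - s'| + |l - l'|) := by
  have h_lip (x y : ℝ) : |h x - h y| ≤ |x - y| := by
    subst hh
    simpa [dist_eq] using ((LipschitzWith.id.min_const 1).const_max (-1)).dist_le_mul x y
  have h_bdd (x : ℝ) : |h x| ≤ 1 := by
    subst hh
    exact abs_le.2 ⟨le_max_left _ _, max_le (by norm_num) (min_le_right _ _)⟩
  intro s l s' l'
  subst hq
  have h_tanh : |tanh l - tanh l'| ≤ |l - l'| := by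
    simpa [dist_eq] using lipschitzWith_tanh.dist_le_mul l l'
  have h_end : |(1 + h s * tanh l) - (1 + h s' * tanh l')| ≤ |s - s'| + |l - l'| := by
    rw [add_sub_add_left_eq_sub]
    linarith [abs_mul_sub_mul_le_of_abs_le_one (x' := h s') (y := tanh l) (h_bdd s)
      (abs_tanh_lt_one l').le, h_lip s s']
  have h_coef : |-2 * h s - -2 * h s'| ≤ 2 * |s - s'| := by
    rw [← mul_sub, abs_mul, abs_neg, abs_two]
    exact mul_le_mul_of_nonneg_left (h_lip s s') zero_le_two
  have h_vol : volume.real (Ioo (0 : ℝ) 2) = 2 := by simp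
  calc _ ≤ |-2 * h s - -2 * h s'| * volume.real (Ioo (0 : ℝ) 2)
          + |-2 * h s'| * volume.real (Ioo 0 (1 + h s * tanh l) ∆ Ioo 0 (1 + h s' * tanh l')) :=
        setIntegral_abs_mul_indicator_sub_mul_indicator_le measure_Ioo_lt_top.ne
          (measurableSet_Ioo.symmDiff measurableSet_Ioo)
          (measure_symmDiff_ne_top measure_Ioo_lt_top.ne measure_Ioo_lt_top.ne) _ _
    _ ≤ 2 * |s - s'| * 2 + 2 * (|s - s'| + |l - l'|) := by
        rw [h_vol, abs_mul, abs_neg, abs_two]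
        gcongr
        · linarith [h_bdd s']
        · exact (volume_real_Ioo_symmDiff_Ioo_le _ _ _).trans h_end
    _ ≤ 6 * (|s - s'| + |l - l'|) := by linarith [abs_nonneg (l - l')]
end
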